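/- Suppose x̄ ∈ [0,1]^N satisfies 1^T x̄ + (δ/2)‖x̄‖² ≤ 1^T x• + (δ/2)‖x•‖², where x• is optimal for the regularized problem, and let e_i = [1 - (A x̄)_i]_+ with ‖e‖ ≤ ε. Define x = x̄ + e. Then x is feasible for the LP {x ≥ 0, A x ≥ 1} and satisfies (1^T x - 1^T x*)/(1^T x*) ≤ δ/2 + √N ε (d_max+1)/N, where x* is an LP optimum. -/

import Mathlib

/-!
Row `i` of `A (x̄ + e)` is at least `(A x̄)_i + e_i ≥ 1`, because `A` is nonnegative with unit
diagonal. For the cost, the regularized bounds give `1ᵀx̄ ≤ (1 + δ/2) 1ᵀx*`, and Cauchy–Schwarz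
gives `1ᵀe ≤ √N ‖e‖ ≤ √N ε`; dividing the excess `1ᵀe` by `1ᵀx* ≥ N/(d_max+1)` yields the
second term of the bound.
-/

open Finset Matrix

theorem Finset.sum_le_sqrt_card_mul_sqrt_sum_sq {ι : Type*} (s : Finset ι) (f : ι → ℝ) :
    ∑ i ∈ s, f i ≤ √(#s) * √(∑ i ∈ s, f i ^ 2) := by
  rw [← Real.sqrt_mul (Nat.cast_nonneg _)]
  exact Real.le_sqrt_of_sq_le (sq_sum_le_card_mul_sum_sq)

-- The diagonal of `A` alone already contributes `e i` to row `i` of `A *ᵥ e`.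
theorem Matrix.one_le_mulVec_add_of_residual_le {ι : Type*} [Fintype ι]
    {A : Matrix ι ι ℝ} (hA : ∀ i j, 0 ≤ A i j) (hdiag : ∀ i, 1 ≤ A i i) {y e : ι → ℝ}
    (he₀ : ∀ i, 0 ≤ e i) (he : ∀ i, 1 - (A *ᵥ y) i ≤ e i) (i : ι) :
    1 ≤ (A *ᵥ (y + e)) i := by
  have hdiag_term : e i ≤ (A *ᵥ e) i :=
    calc e i ≤ A i i * e i := le_mul_of_one_le_left (he₀ i) (hdiag i)
      _ ≤ ∑ j, A i j * e j :=
        single_le_sum (f := fun j ↦ A i j * e j) (fun j _ ↦ mul_nonneg (hA i j) (he₀ j))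
          (mem_univ i)
  rw [mulVec_add, Pi.add_apply]
  linarith [he i]

theorem relative_gap_le {S T L a c : ℝ} (hL : 0 < L) (hLS : L ≤ S) (hc : 0 ≤ c)
    (hT : T ≤ (1 + a) * S + c) :
    (T - S) / S ≤ a + c / L := by
  have hS : 0 < S := hL.trans_le hLS
  have hcS : c / S ≤ c / L := div_le_div_of_nonneg_left hc hL hLS
  calc (T - S) / S ≤ ((1 + a) * S + c - S) / S := by gcongr
    _ = a + c / S := by field_simp; ring
    _ ≤ a + c / L := by gcongr

theorem stmt_11_general {N : ℕ} (hN : 0 < N) (A : Matrix (Fin N) (Fin N) ℝ) (dmax : ℕ)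
    (δ ε : ℝ) (hδ : 0 < δ)
    (h01 : ∀ i j, A i j = 0 ∨ A i j = 1) (hdiag : ∀ i, A i i = 1)
    (xbar xs xb e x : Fin N → ℝ)
    (hxbar : ∀ i, 0 ≤ xbar i ∧ xbar i ≤ 1)
    (hreg : ∑ i, xbar i + δ / 2 * ∑ i, xbar i ^ 2
      ≤ ∑ i, xb i + δ / 2 * ∑ i, xb i ^ 2)
    (happrox : ∑ i, xb i + δ / 2 * ∑ i, xb i ^ 2 ≤ (1 + δ / 2) * ∑ i, xs i)
    (hlower : (N : ℝ) / (dmax + 1) ≤ ∑ i, xs i)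
    (he : ∀ i, e i = max 0 (1 - A.mulVec xbar i))
    (hE : Real.sqrt (∑ i, e i ^ 2) ≤ ε)
    (hx : ∀ i, x i = xbar i + e i) :
    (∀ i, 0 ≤ x i) ∧ (∀ i, 1 ≤ A.mulVec x i) ∧
    (∑ i, x i - ∑ i, xs i) / (∑ i, xs i)
      ≤ δ / 2 + Real.sqrt N * ε * (dmax + 1) / N := by
  have hx : x = xbar + e := funext hx
  have he₀ (i : Fin N) : 0 ≤ e i := he i ▸ le_max_left _ _
  have hA (i j : Fin N) : 0 ≤ A i j := by rcases h01 i j with h | h <;> simp [h]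
  refine ⟨fun i ↦ hx ▸ add_nonneg (hxbar i).1 (he₀ i),
    hx ▸ one_le_mulVec_add_of_residual_le hA (fun i ↦ (hdiag i).ge) he₀
      (fun i ↦ he i ▸ le_max_right _ _), ?_⟩
  have hsum_e : ∑ i, e i ≤ √N * ε :=
    calc ∑ i, e i ≤ √N * √(∑ i, e i ^ 2) := by
          simpa using sum_le_sqrt_card_mul_sqrt_sum_sq univ e
      _ ≤ √N * ε := by gcongr
  have hsum_xbar : ∑ i, xbar i ≤ (1 + δ / 2) * ∑ i, xs i := by
    have : 0 ≤ δ / 2 * ∑ i, xbar i ^ 2 := by positivity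
    linarith
  have hsum_x : ∑ i, x i ≤ (1 + δ / 2) * ∑ i, xs i + √N * ε := by
    rw [hx, Pi.add_def, sum_add_distrib]
    linarith
  have hε : 0 ≤ ε := (Real.sqrt_nonneg _).trans hE
  have hgap := relative_gap_le (by positivity) hlower (by positivity) hsum_x
  rwa [div_div_eq_mul_div] at hgap

theorem stmt_11 {N : ℕ} (hN : 0 < N) (A : Matrix (Fin N) (Fin N) ℝ) (dmax : ℕ)
    (δ ε : ℝ) (hδ : 0 < δ) (hε : 0 < ε)
    (h01 : ∀ i j, A i j = 0 ∨ A i j = 1) (hdiag : ∀ i, A i i = 1)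
    (xbar xs xb e x : Fin N → ℝ)
    (hxbar : ∀ i, 0 ≤ xbar i ∧ xbar i ≤ 1)
    (hxs : ((∀ i, 0 ≤ xs i ∧ xs i ≤ 1) ∧ ∀ i, 1 ≤ A.mulVec xs i) ∧
      ∀ y : Fin N → ℝ, ((∀ i, 0 ≤ y i ∧ y i ≤ 1) ∧ ∀ i, 1 ≤ A.mulVec y i) →
        ∑ i, xs i ≤ ∑ i, y i)
    (hreg : ∑ i, xbar i + δ / 2 * ∑ i, xbar i ^ 2
      ≤ ∑ i, xb i + δ / 2 * ∑ i, xb i ^ 2)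
    (happrox : ∑ i, xb i + δ / 2 * ∑ i, xb i ^ 2 ≤ (1 + δ / 2) * ∑ i, xs i)
    (hlower : (N : ℝ) / (dmax + 1) ≤ ∑ i, xs i)
    (he : ∀ i, e i = max 0 (1 - A.mulVec xbar i))
    (hE : Real.sqrt (∑ i, e i ^ 2) ≤ ε)
    (hx : ∀ i, x i = xbar i + e i) :
    (∀ i, 0 ≤ x i) ∧ (∀ i, 1 ≤ A.mulVec x i) ∧
    (∑ i, x i - ∑ i, xs i) / (∑ i, xs i)
      ≤ δ / 2 + Real.sqrt N * ε * (dmax + 1) / N :=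
  stmt_11_general hN A dmax δ ε hδ h01 hdiag xbar xs xb e x hxbar hreg happrox hlower he hE hx
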